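/- arXiv:1001.2587 — 5 statements merged into one kernel-verified Lean document; each statement's English description precedes it below -/
import Mathlib

section
/- Let $n\ge 3$, $-2<l_2<l_1\le 0$, $1<p<q$, and let $u:(0,\infty)\to(0,\infty)$ be a $C^2$ solution of $u''+\frac{n-1}{r}u'+r^{l_1}u^p+r^{l_2}u^q=0$. If $u(r)\to\infty$ as $r\to 0^+$, then there exist $C>0$ and $r_0>0$ such that $u(r)\le C\, r^{-\frac{2+l_2}{q-1}}$ for all $0<r<r_0$. -/
open Filter Topology Set

/-!
Multiplied by `r ^ (n - 1)`, the equation says that `v = r ^ (n - 1) u'` is decreasing. If `u'`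
were positive somewhere, `v` and hence `u'` would stay positive closer to `0`, and `u` could not
blow up; so `u` is decreasing. Integrating `v' ≤ -r ^ (n - 1 + l₂) u ^ q` over `[t / 2, t]`, with
`v (t / 2) ≤ 0` and `u ≥ u t` there, gives `-u' t ≥ c t ^ (1 + l₂) u t ^ q`. Thus
`(u ^ (1 - q))' ≥ (q - 1) c t ^ (1 + l₂)`, and as `u ^ (1 - q) → 0` at `0`, integrating from `0`
yields `u t ^ (1 - q) ≥ c' t ^ (2 + l₂)`.
-/

theorem Convex.monotoneOn_of_hasDerivAt_nonneg {D : Set ℝ} (hD : Convex ℝ D) {f f' : ℝ → ℝ}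
    (hf : ∀ x ∈ D, HasDerivAt f (f' x) x) (hf'₀ : ∀ x ∈ interior D, 0 ≤ f' x) :
    MonotoneOn f D :=
  monotoneOn_of_hasDerivWithinAt_nonneg hD (fun x hx => (hf x hx).continuousAt.continuousWithinAt)
    (fun x hx => (hf x (interior_subset hx)).hasDerivWithinAt) hf'₀

theorem Convex.antitoneOn_of_hasDerivAt_nonpos {D : Set ℝ} (hD : Convex ℝ D) {f f' : ℝ → ℝ}
    (hf : ∀ x ∈ D, HasDerivAt f (f' x) x) (hf'₀ : ∀ x ∈ interior D, f' x ≤ 0) :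
    AntitoneOn f D :=
  antitoneOn_of_hasDerivWithinAt_nonpos hD (fun x hx => (hf x hx).continuousAt.continuousWithinAt)
    (fun x hx => (hf x (interior_subset hx)).hasDerivWithinAt) hf'₀

theorem le_mul_rpow_of_mul_rpow_le_rpow_one_sub {x t b c q : ℝ} (hq : 1 < q) (hc : 0 < c)
    (hx : 0 < x) (ht : 0 < t) (h : c * t ^ b ≤ x ^ (1 - q)) :
    x ≤ c ^ (-1 / (q - 1)) * t ^ (-b / (q - 1)) := by
  have hq' : q - 1 ≠ 0 := by linarith
  have key := Real.rpow_le_rpow_of_nonpos (by positivity) h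
    (div_nonpos_of_nonpos_of_nonneg (by norm_num) (by linarith) : -1 / (q - 1) ≤ 0)
  rwa [← Real.rpow_mul hx.le, show (1 - q) * (-1 / (q - 1)) = 1 by field_simp; ring,
    Real.rpow_one, Real.mul_rpow hc.le (by positivity), ← Real.rpow_mul ht.le,
    mul_div_assoc', mul_neg_one] at key

section RadialODE

variable {u u' u'' : ℝ → ℝ} {a l q : ℝ}

theorem hasDerivAt_rpow_mul {r : ℝ} (hr : 0 < r) (h : HasDerivAt u' (u'' r) r) :
    HasDerivAt (fun s => s ^ a * u' s) (r ^ a * (u'' r + a / r * u' r)) r := by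
  refine ((Real.hasDerivAt_rpow_const (p := a) (Or.inl hr.ne')).mul h).congr_deriv ?_
  rw [Real.rpow_sub_one hr.ne']
  field_simp
  ring

theorem antitoneOn_rpow_mul (hu' : ∀ r > 0, HasDerivAt u' (u'' r) r)
    (h : ∀ r > 0, u'' r + a / r * u' r ≤ 0) :
    AntitoneOn (fun r => r ^ a * u' r) (Ioi 0) :=
  (convex_Ioi 0).antitoneOn_of_hasDerivAt_nonpos (fun r hr => hasDerivAt_rpow_mul hr (hu' r hr))
    fun r hr => by
      rw [interior_Ioi] at hr
      exact mul_nonpos_of_nonneg_of_nonpos (Real.rpow_nonneg hr.out.le a) (h r hr)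

theorem nonpos_of_antitoneOn_rpow_mul (hu : ∀ r > 0, HasDerivAt u (u' r) r)
    (hv : AntitoneOn (fun r => r ^ a * u' r) (Ioi 0)) (hblow : Tendsto u (𝓝[>] 0) atTop)
    {t : ℝ} (ht : 0 < t) : u' t ≤ 0 := by
  by_contra! hpos
  have hmono : MonotoneOn u (Ioc 0 t) := by
    refine (convex_Ioc 0 t).monotoneOn_of_hasDerivAt_nonneg (fun r hr => hu r hr.1) fun r hr => ?_
    rw [interior_Ioc] at hr
    have hvr : t ^ a * u' t ≤ r ^ a * u' r := hv hr.1 ht hr.2.le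
    exact (pos_of_mul_pos_right ((by positivity : 0 < t ^ a * u' t).trans_le hvr)
      (Real.rpow_nonneg hr.1.le a)).le
  obtain ⟨r, hur, hr⟩ := ((hblow.eventually_gt_atTop (u t)).and
    (Ioo_mem_nhdsGT ht)).exists
  exact (hmono ⟨hr.1, hr.2.le⟩ ⟨ht, le_rfl⟩ hr.2.le).not_gt hur

theorem inv_two_rpow_mul_le_neg_deriv (hu : ∀ r > 0, HasDerivAt u (u' r) r)
    (hu' : ∀ r > 0, HasDerivAt u' (u'' r) r) (hpos : ∀ r > 0, 0 < u r)
    (hneg : ∀ r > 0, u' r ≤ 0) (hal : 0 ≤ a + l) (hq : 0 ≤ q)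
    (h : ∀ r > 0, u'' r + a / r * u' r ≤ -(r ^ l * u r ^ q)) {t : ℝ} (ht : 0 < t) :
    (2 ^ (a + l + 1))⁻¹ * t ^ (1 + l) * u t ^ q ≤ -u' t := by
  have hanti : AntitoneOn u (Ioi 0) :=
    (convex_Ioi 0).antitoneOn_of_hasDerivAt_nonpos hu fun r hr => hneg r (by simpa using hr)
  set K := (t / 2) ^ (a + l) * u t ^ q with hK
  have hvK : AntitoneOn (fun r => r ^ a * u' r + K * r) (Icc (t / 2) t) := by
    refine (convex_Icc _ _).antitoneOn_of_hasDerivAt_nonpos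
      (f' := fun r => r ^ a * (u'' r + a / r * u' r) + K) (fun r hr => ?_) fun r hr => ?_
    · have hr0 : 0 < r := by linarith [hr.1]
      have hd := (hasDerivAt_rpow_mul (a := a) hr0 (hu' r hr0)).add ((hasDerivAt_id r).const_mul K)
      rwa [mul_one] at hd
    rw [interior_Icc] at hr
    have hr0 : 0 < r := by linarith [hr.1]
    calc r ^ a * (u'' r + a / r * u' r) + K ≤ r ^ a * -(r ^ l * u r ^ q) + K := by
          gcongr
          exact h r hr0
      _ = K - r ^ (a + l) * u r ^ q := by rw [Real.rpow_add hr0]; ring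
      _ ≤ 0 := by
          have hut := hpos t ht
          rw [sub_nonpos, hK]
          gcongr
          · exact hr.1.le
          · exact hanti hr0 ht hr.2.le
  have hstep := hvK ⟨le_rfl, by linarith⟩ ⟨by linarith, le_rfl⟩ (by linarith)
  have hleft : (t / 2) ^ a * u' (t / 2) ≤ 0 :=
    mul_nonpos_of_nonneg_of_nonpos (by positivity) (hneg _ (by positivity))
  have hK' : t ^ a * ((2 ^ (a + l + 1))⁻¹ * t ^ (1 + l) * u t ^ q) = K * (t / 2) := by
    rw [hK, Real.div_rpow ht.le zero_le_two, Real.rpow_add_one two_ne_zero,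
      Real.rpow_add ht, Real.rpow_add ht, Real.rpow_one]
    field_simp
  refine le_of_mul_le_mul_left ?_ (Real.rpow_pos_of_pos ht a)
  simp only at hstep
  linarith

theorem mul_rpow_le_rpow_one_sub (hu : ∀ r > 0, HasDerivAt u (u' r) r)
    (hpos : ∀ r > 0, 0 < u r) (hq : 1 < q) (hl : -2 < l) (hblow : Tendsto u (𝓝[>] 0) atTop)
    {c : ℝ} (h : ∀ r > 0, c * r ^ (1 + l) * u r ^ q ≤ -u' r) {t : ℝ} (ht : 0 < t) :
    (q - 1) * c / (2 + l) * t ^ (2 + l) ≤ u t ^ (1 - q) := by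
  set k := (q - 1) * c / (2 + l)
  set g := fun r => u r ^ (1 - q) - k * r ^ (2 + l)
  have hg : MonotoneOn g (Ioi 0) := by
    refine (convex_Ioi 0).monotoneOn_of_hasDerivAt_nonneg (fun r hr => ((hu r hr).rpow_const
      (Or.inl (hpos r hr).ne')).sub ((Real.hasDerivAt_rpow_const (Or.inl hr.out.ne')).const_mul k))
      fun r hr => ?_
    rw [interior_Ioi] at hr
    have hr0 : 0 < r := hr
    have hur := hpos r hr0
    have hmul : c * r ^ (1 + l) ≤ u r ^ (-q) * -u' r := by
      calc c * r ^ (1 + l) = u r ^ (-q) * (c * r ^ (1 + l) * u r ^ q) := by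
            rw [Real.rpow_neg hur.le]; field_simp
        _ ≤ u r ^ (-q) * -u' r := by gcongr; exact h r hr0
    have hk : k * ((2 + l) * r ^ (2 + l - 1)) = (q - 1) * (c * r ^ (1 + l)) := by
      have : 2 + l ≠ 0 := by linarith
      rw [show 2 + l - 1 = 1 + l by ring]
      simp only [k]
      field_simp
    rw [hk, show 1 - q - 1 = -q by ring]
    nlinarith
  have hlim : Tendsto g (𝓝[>] 0) (𝓝 0) := by
    have hw : Tendsto (fun r => u r ^ (1 - q)) (𝓝[>] 0) (𝓝 0) := by
      rw [show 1 - q = -(q - 1) by ring]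
      exact (tendsto_rpow_neg_atTop (by linarith)).comp hblow
    have hp : Tendsto (fun r : ℝ => r ^ (2 + l)) (𝓝[>] 0) (𝓝 0) := by
      simpa [Real.zero_rpow (by linarith : 2 + l ≠ 0)] using
        (Real.continuousAt_rpow_const 0 (2 + l) (Or.inr (by linarith))).tendsto.mono_left
          nhdsWithin_le_nhds
    simpa using hw.sub (hp.const_mul k)
  have hgt : 0 ≤ g t := le_of_tendsto hlim <| by
    filter_upwards [Ioo_mem_nhdsGT ht] with s hs using hg hs.1 ht hs.2.le
  simpa [g, sub_nonneg] using hgt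

end RadialODE

theorem stmt_0_general (n : ℕ) (hn : 3 ≤ n) (l₁ l₂ p q : ℝ)
    (hl₂ : -2 < l₂) (hp : 1 < p) (hpq : p < q)
    (u : ℝ → ℝ) (hupos : ∀ r > 0, 0 < u r)
    (hC2 : ContDiffOn ℝ 2 u (Set.Ioi 0))
    (hode : ∀ r > 0, deriv (deriv u) r + ((n : ℝ) - 1) / r * deriv u r
      + r ^ l₁ * u r ^ p + r ^ l₂ * u r ^ q = 0)
    (hblow : Tendsto u (𝓝[>] (0 : ℝ)) atTop) :
    ∃ C > 0, ∃ r₀ > 0, ∀ r, 0 < r → r < r₀ →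
      u r ≤ C * r ^ (-(2 + l₂) / (q - 1)) := by
  have hq : 1 < q := hp.trans hpq
  have hnl : 0 ≤ (n : ℝ) - 1 + l₂ := by
    have : (3 : ℝ) ≤ n := by exact_mod_cast hn
    linarith
  have hu : ∀ r > 0, HasDerivAt u (deriv u r) r := fun r hr =>
    ((hC2.differentiableOn two_ne_zero).differentiableAt (Ioi_mem_nhds hr)).hasDerivAt
  have hu' : ∀ r > 0, HasDerivAt (deriv u) (deriv (deriv u) r) r := fun r hr =>
    (((hC2.deriv_of_isOpen isOpen_Ioi (by norm_num : (1 : WithTop ℕ∞) + 1 ≤ 2)).differentiableOn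
      one_ne_zero).differentiableAt (Ioi_mem_nhds hr)).hasDerivAt
  have hode' : ∀ r > 0, deriv (deriv u) r + ((n : ℝ) - 1) / r * deriv u r
      ≤ -(r ^ l₂ * u r ^ q) := fun r hr => by
    have := hupos r hr
    linarith [hode r hr, (by positivity : 0 ≤ r ^ l₁ * u r ^ p)]
  have hv := antitoneOn_rpow_mul hu' fun r hr => (hode' r hr).trans <| by
    have := hupos r hr
    exact neg_nonpos.2 (by positivity)
  have hu'_nonpos := fun t (ht : 0 < t) => nonpos_of_antitoneOn_rpow_mul hu hv hblow ht
  have hc : (0 : ℝ) < (q - 1) * (2 ^ ((n : ℝ) - 1 + l₂ + 1))⁻¹ / (2 + l₂) := by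
    have : 0 < 2 + l₂ := by linarith
    have : 0 < q - 1 := by linarith
    positivity
  refine ⟨_, Real.rpow_pos_of_pos hc _, 1, one_pos, fun r hr _ =>
    le_mul_rpow_of_mul_rpow_le_rpow_one_sub hq hc (hupos r hr) hr ?_⟩
  exact mul_rpow_le_rpow_one_sub hu hupos hq hl₂ hblow
    (fun t ht => inv_two_rpow_mul_le_neg_deriv hu hu' hupos hu'_nonpos hnl (by linarith) hode' ht) hr

theorem stmt_0 (n : ℕ) (hn : 3 ≤ n) (l₁ l₂ p q : ℝ)
    (hl₂ : -2 < l₂) (hl : l₂ < l₁) (hl₁ : l₁ ≤ 0) (hp : 1 < p) (hpq : p < q)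
    (u : ℝ → ℝ) (hupos : ∀ r > 0, 0 < u r)
    (hC2 : ContDiffOn ℝ 2 u (Set.Ioi 0))
    (hode : ∀ r > 0, deriv (deriv u) r + ((n : ℝ) - 1) / r * deriv u r
      + r ^ l₁ * u r ^ p + r ^ l₂ * u r ^ q = 0)
    (hblow : Tendsto u (𝓝[>] (0 : ℝ)) atTop) :
    ∃ C > 0, ∃ r₀ > 0, ∀ r, 0 < r → r < r₀ →
      u r ≤ C * r ^ (-(2 + l₂) / (q - 1)) :=
  stmt_0_general n hn l₁ l₂ p q hl₂ hp hpq u hupos hC2 hode hblow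
end

section
/- Let $n\ge 3$, $-2<l_2<l_1\le 0$, $1<p<q$, and let $u:(0,\infty)\to(0,\infty)$ be a $C^2$ solution of $u''+\frac{n-1}{r}u'+r^{l_1}u^p+r^{l_2}u^q=0$. If $u(r)\to 0$ as $r\to\infty$, then there exist $C>0$ and $R>0$ such that $u(r)\le C\, r^{-\frac{2+l_1}{p-1}}$ for all $r>R$. -/
/-!
With `a = n - 1`, the radial flux `v = r ^ a * u'` satisfies
`v' = -r ^ a (r ^ l₁ u ^ p + r ^ l₂ u ^ q) < 0`, so `v` decreases. As `u > 0` tends to `0`, `u'` is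
negative somewhere, hence `v < 0` and `u` decreases beyond some `r₀`. Integrating `u' = v / r ^ a`
over `[r, 2r]` gives `-v(r) r ≲ u(r) r ^ a`, while integrating `v' ≤ -r ^ (a + l₁) u ^ p` over
`[r/2, r]` gives `r ^ (a + l₁ + 1) u(r) ^ p ≲ -v(r)`. Together, `u(r) ^ (p - 1) ≲ r ^ (-(2 + l₁))`.
-/

open Filter Topology Set Real

noncomputable def radialFlux (a : ℝ) (u : ℝ → ℝ) (r : ℝ) : ℝ := r ^ a * deriv u r

section RadialFlux

variable {u : ℝ → ℝ} {a r ρ σ : ℝ}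

lemma deriv_eq_radialFlux_div (hr : 0 < r) : deriv u r = radialFlux a u r / r ^ a := by
  rw [radialFlux, mul_div_cancel_left₀ _ (rpow_pos_of_pos hr a).ne']

lemma hasDerivAt_radialFlux (hr : 0 < r) (hu : DifferentiableAt ℝ (deriv u) r) :
    HasDerivAt (radialFlux a u) (r ^ a * (deriv (deriv u) r + a / r * deriv u r)) r := by
  have h := (hasDerivAt_rpow_const (p := a) (Or.inl hr.ne')).mul hu.hasDerivAt
  rw [rpow_sub_one hr.ne'] at h
  exact h.congr_deriv (by ring)

lemma differentiableOn_radialFlux (hu' : DifferentiableOn ℝ (deriv u) (Ioi 0)) :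
    DifferentiableOn ℝ (radialFlux a u) (Ioi 0) := fun _ hr =>
  (hasDerivAt_radialFlux hr (hu'.differentiableAt (isOpen_Ioi.mem_nhds hr))).differentiableAt
    |>.differentiableWithinAt

lemma deriv_radialFlux (hu' : DifferentiableOn ℝ (deriv u) (Ioi 0)) (hr : 0 < r) :
    deriv (radialFlux a u) r = r ^ a * (deriv (deriv u) r + a / r * deriv u r) :=
  (hasDerivAt_radialFlux hr (hu'.differentiableAt (isOpen_Ioi.mem_nhds hr))).deriv

lemma antitoneOn_radialFlux (hu' : DifferentiableOn ℝ (deriv u) (Ioi 0))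
    (hode : ∀ r > 0, deriv (deriv u) r + a / r * deriv u r ≤ 0) :
    AntitoneOn (radialFlux a u) (Ioi 0) := by
  refine antitoneOn_of_deriv_nonpos (convex_Ioi 0) (differentiableOn_radialFlux hu').continuousOn
    (by simpa only [interior_Ioi] using differentiableOn_radialFlux hu') fun r hr => ?_
  rw [interior_Ioi] at hr
  rw [deriv_radialFlux hu' hr]
  exact mul_nonpos_of_nonneg_of_nonpos (rpow_nonneg hr.le a) (hode r hr)

lemma antitoneOn_Ici_of_radialFlux_nonpos {r₀ : ℝ} (hr₀ : 0 < r₀)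
    (hu : DifferentiableOn ℝ u (Ioi 0)) (hanti : AntitoneOn (radialFlux a u) (Ioi 0))
    (hv : radialFlux a u r₀ ≤ 0) : AntitoneOn u (Ici r₀) := by
  have hsub : Ici r₀ ⊆ Ioi 0 := fun x hx => hr₀.trans_le hx
  refine antitoneOn_of_deriv_nonpos (convex_Ici r₀) (hu.mono hsub).continuousOn
    (hu.mono (interior_subset.trans hsub)) fun x hx => ?_
  rw [interior_Ici] at hx
  have hx0 : 0 < x := hr₀.trans hx
  rw [deriv_eq_radialFlux_div hx0]
  exact div_nonpos_of_nonpos_of_nonneg ((hanti hr₀ hx0 hx.le).trans hv) (rpow_nonneg hx0.le a)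

/-- Integrating `u' = v / r ^ a ≤ v(ρ) / σ ^ a` over `[ρ, σ]`. -/
lemma neg_radialFlux_mul_sub_le (ha : 0 ≤ a) (hρ : 0 < ρ) (hρσ : ρ ≤ σ)
    (hu : DifferentiableOn ℝ u (Ioi 0)) (hanti : AntitoneOn (radialFlux a u) (Ioi 0))
    (hv : radialFlux a u ρ ≤ 0) (huσ : 0 ≤ u σ) :
    -radialFlux a u ρ * (σ - ρ) ≤ u ρ * σ ^ a := by
  have hsub : Icc ρ σ ⊆ Ioi 0 := fun x hx => hρ.trans_le hx.1
  have hσa : 0 < σ ^ a := rpow_pos_of_pos (hρ.trans_le hρσ) a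
  have hderiv : ∀ x ∈ interior (Icc ρ σ), deriv u x ≤ radialFlux a u ρ / σ ^ a := by
    rw [interior_Icc]
    intro x hx
    have hx0 : 0 < x := hρ.trans hx.1
    rw [deriv_eq_radialFlux_div hx0]
    calc radialFlux a u x / x ^ a ≤ radialFlux a u ρ / x ^ a :=
          div_le_div_of_nonneg_right (hanti hρ hx0 hx.1.le) (rpow_nonneg hx0.le a)
      _ ≤ radialFlux a u ρ / σ ^ a := by
          rw [div_le_div_iff₀ (rpow_pos_of_pos hx0 a) hσa]
          exact mul_le_mul_of_nonpos_left (rpow_le_rpow hx0.le hx.2.le ha) hv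
  have hslope := (convex_Icc ρ σ).image_sub_le_mul_sub_of_deriv_le (hu.mono hsub).continuousOn
    (hu.mono (interior_subset.trans hsub)) hderiv ρ ⟨le_rfl, hρσ⟩ σ ⟨hρσ, le_rfl⟩ hρσ
  rw [div_mul_eq_mul_div, le_div_iff₀ hσa] at hslope
  nlinarith [mul_nonneg huσ hσa.le]

/-- Integrating `v' ≤ -r ^ (a + l) u ^ p ≤ -ρ ^ (a + l) u(σ) ^ p` over `[ρ, σ]`. -/
lemma mul_sub_le_radialFlux_sub {l p : ℝ} (hal : 0 ≤ a + l) (hp : 0 ≤ p) (hρ : 0 < ρ)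
    (hρσ : ρ ≤ σ) (hu' : DifferentiableOn ℝ (deriv u) (Ioi 0))
    (hsuper : ∀ r > 0, deriv (deriv u) r + a / r * deriv u r + r ^ l * u r ^ p ≤ 0)
    (huanti : AntitoneOn u (Icc ρ σ)) (huσ : 0 ≤ u σ) :
    ρ ^ (a + l) * u σ ^ p * (σ - ρ) ≤ radialFlux a u ρ - radialFlux a u σ := by
  have hsub : Icc ρ σ ⊆ Ioi 0 := fun x hx => hρ.trans_le hx.1
  have hderiv : ∀ x ∈ interior (Icc ρ σ), deriv (radialFlux a u) x ≤ -(ρ ^ (a + l) * u σ ^ p) := by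
    rw [interior_Icc]
    intro x hx
    have hx0 : 0 < x := hρ.trans hx.1
    have hux : u σ ≤ u x := huanti ⟨hx.1.le, hx.2.le⟩ ⟨hρσ, le_rfl⟩ hx.2.le
    rw [deriv_radialFlux hu' hx0, le_neg]
    calc ρ ^ (a + l) * u σ ^ p ≤ x ^ (a + l) * u x ^ p :=
          mul_le_mul (rpow_le_rpow hρ.le hx.1.le hal) (rpow_le_rpow huσ hux hp)
            (rpow_nonneg huσ p) (rpow_nonneg hx0.le _)
      _ = x ^ a * (x ^ l * u x ^ p) := by rw [rpow_add hx0]; ring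
      _ ≤ -(x ^ a * (deriv (deriv u) x + a / x * deriv u x)) := by
          rw [← mul_neg]
          exact mul_le_mul_of_nonneg_left (by linarith [hsuper x hx0]) (rpow_nonneg hx0.le a)
  have hv := differentiableOn_radialFlux (a := a) hu'
  have hslope := (convex_Icc ρ σ).image_sub_le_mul_sub_of_deriv_le (hv.mono hsub).continuousOn
    (hv.mono (interior_subset.trans hsub)) hderiv ρ ⟨le_rfl, hρσ⟩ σ ⟨hρσ, le_rfl⟩ hρσ
  linarith

end RadialFlux

lemma exists_deriv_neg_of_tendsto_zero {u : ℝ → ℝ} (hpos : ∀ r > 0, 0 < u r)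
    (hu : DifferentiableOn ℝ u (Ioi 0)) (hlim : Tendsto u atTop (𝓝 0)) :
    ∃ r > 0, deriv u r < 0 := by
  by_contra! h
  have hmono : MonotoneOn u (Ioi 0) :=
    monotoneOn_of_deriv_nonneg (convex_Ioi 0) hu.continuousOn
      (by rwa [interior_Ioi]) (by rw [interior_Ioi]; exact fun x hx => h x hx)
  have hle : ∀ᶠ r in atTop, u 1 ≤ u r := by
    filter_upwards [eventually_ge_atTop (1 : ℝ)] with r hr
    exact hmono (mem_Ioi.2 one_pos) (mem_Ioi.2 (one_pos.trans_le hr)) hr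
  linarith [ge_of_tendsto hlim hle, hpos 1 one_pos]

lemma rpow_sub_one_mul_rpow_le_of_bounds {U r w a l p : ℝ} (hU : 0 < U) (hr : 0 < r)
    (hA : -w * (2 * r - r) ≤ U * (2 * r) ^ a)
    (hB : (r / 2) ^ (a + l) * U ^ p * (r - r / 2) ≤ -w) :
    U ^ (p - 1) * r ^ (2 + l) ≤ 2 ^ a * 2 ^ (a + l) * 2 := by
  rw [show 2 * r - r = r by ring] at hA
  have hAB : (r / 2) ^ (a + l) * U ^ p * (r - r / 2) * r ≤ U * (2 * r) ^ a :=
    (mul_le_mul_of_nonneg_right hB hr.le).trans hA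
  have hUp : U ^ p = U ^ (p - 1) * U := by rw [← rpow_add_one hU.ne']; ring_nf
  rw [div_rpow hr.le zero_le_two, mul_rpow zero_le_two hr.le, rpow_add hr, hUp] at hAB
  field_simp at hAB
  rw [rpow_add hr, rpow_two]
  linear_combination hAB

lemma le_mul_rpow_of_rpow_sub_one_mul_rpow_le {U r b K p : ℝ} (hU : 0 ≤ U) (hr : 0 < r)
    (hp : 1 < p) (h : U ^ (p - 1) * r ^ b ≤ K) :
    U ≤ K ^ (1 / (p - 1)) * r ^ (-b / (p - 1)) := by
  have hK : 0 ≤ K := le_trans (by positivity) h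
  have hexp : 0 < 1 / (p - 1) := one_div_pos.2 (by linarith)
  have h' : U ^ (p - 1) ≤ K * r ^ (-b) := by
    rwa [rpow_neg hr.le, ← div_eq_mul_inv, le_div_iff₀ (rpow_pos_of_pos hr b)]
  calc U = (U ^ (p - 1)) ^ (1 / (p - 1)) := by
        rw [← rpow_mul hU, mul_one_div_cancel (by linarith), rpow_one]
    _ ≤ (K * r ^ (-b)) ^ (1 / (p - 1)) := rpow_le_rpow (by positivity) h' hexp.le
    _ = K ^ (1 / (p - 1)) * r ^ (-b / (p - 1)) := by
        rw [mul_rpow hK (by positivity), ← rpow_mul hr.le, mul_one_div]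

theorem decay_of_radial_supersolution {u : ℝ → ℝ} {a l p : ℝ} (ha : 0 ≤ a) (hal : 0 ≤ a + l)
    (hp : 1 < p) (hpos : ∀ r > 0, 0 < u r) (hu : ContDiffOn ℝ 2 u (Ioi 0))
    (hsuper : ∀ r > 0, deriv (deriv u) r + a / r * deriv u r + r ^ l * u r ^ p ≤ 0)
    (hdecay : Tendsto u atTop (𝓝 0)) :
    ∃ C > 0, ∃ R > 0, ∀ r, R < r → u r ≤ C * r ^ (-(2 + l) / (p - 1)) := by
  have hu₁ : DifferentiableOn ℝ u (Ioi 0) := hu.differentiableOn (by norm_num)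
  have hu₂ : DifferentiableOn ℝ (deriv u) (Ioi 0) :=
    (hu.deriv_of_isOpen isOpen_Ioi (by norm_num)).differentiableOn one_ne_zero
  have hanti : AntitoneOn (radialFlux a u) (Ioi 0) := antitoneOn_radialFlux hu₂ fun r hr => by
    nlinarith [hsuper r hr, rpow_pos_of_pos hr l, rpow_pos_of_pos (hpos r hr) p]
  obtain ⟨r₀, hr₀, hneg⟩ := exists_deriv_neg_of_tendsto_zero hpos hu₁ hdecay
  have hv : ∀ r, r₀ ≤ r → radialFlux a u r ≤ 0 := fun r hr =>
    (hanti hr₀ (hr₀.trans_le hr) hr).trans (mul_nonpos_of_nonneg_of_nonpos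
      (rpow_nonneg hr₀.le a) hneg.le)
  have hu_anti := antitoneOn_Ici_of_radialFlux_nonpos hr₀ hu₁ hanti (hv r₀ le_rfl)
  refine ⟨(2 ^ a * 2 ^ (a + l) * 2) ^ (1 / (p - 1)), by positivity, 2 * r₀, by positivity,
    fun r hr => ?_⟩
  have hr0 : 0 < r := by linarith
  refine le_mul_rpow_of_rpow_sub_one_mul_rpow_le (hpos r hr0).le hr0 hp
    (rpow_sub_one_mul_rpow_le_of_bounds (w := radialFlux a u r) (hpos r hr0) hr0 ?_ ?_)
  · exact neg_radialFlux_mul_sub_le ha hr0 (by linarith) hu₁ hanti (hv r (by linarith))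
      (hpos _ (by linarith)).le
  · have := mul_sub_le_radialFlux_sub hal (by linarith) (by linarith) (by linarith : r / 2 ≤ r)
      hu₂ hsuper (hu_anti.mono (Icc_subset_Ici_self.trans (Ici_subset_Ici.2 (by linarith))))
      (hpos r hr0).le
    linarith [hv (r / 2) (by linarith)]

theorem stmt_1_general (n : ℕ) (hn : 3 ≤ n) (l₁ l₂ p q : ℝ)
    (hl₂ : -2 < l₂) (hl : l₂ < l₁) (hp : 1 < p)
    (u : ℝ → ℝ) (hupos : ∀ r > 0, 0 < u r)
    (hC2 : ContDiffOn ℝ 2 u (Set.Ioi 0))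
    (hode : ∀ r > 0, deriv (deriv u) r + ((n : ℝ) - 1) / r * deriv u r
      + r ^ l₁ * u r ^ p + r ^ l₂ * u r ^ q = 0)
    (hdecay : Tendsto u atTop (𝓝 0)) :
    ∃ C > 0, ∃ R > 0, ∀ r, R < r →
      u r ≤ C * r ^ (-(2 + l₁) / (p - 1)) := by
  have hn' : (3 : ℝ) ≤ n := by exact_mod_cast hn
  refine decay_of_radial_supersolution (a := (n : ℝ) - 1) (by linarith) (by linarith) hp hupos
    hC2 (fun r hr => ?_) hdecay
  linarith [hode r hr, mul_pos (rpow_pos_of_pos hr l₂) (rpow_pos_of_pos (hupos r hr) q)]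

theorem stmt_1 (n : ℕ) (hn : 3 ≤ n) (l₁ l₂ p q : ℝ)
    (hl₂ : -2 < l₂) (hl : l₂ < l₁) (hl₁ : l₁ ≤ 0) (hp : 1 < p) (hpq : p < q)
    (u : ℝ → ℝ) (hupos : ∀ r > 0, 0 < u r)
    (hC2 : ContDiffOn ℝ 2 u (Set.Ioi 0))
    (hode : ∀ r > 0, deriv (deriv u) r + ((n : ℝ) - 1) / r * deriv u r
      + r ^ l₁ * u r ^ p + r ^ l₂ * u r ^ q = 0)
    (hdecay : Tendsto u atTop (𝓝 0)) :
    ∃ C > 0, ∃ R > 0, ∀ r, R < r →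
      u r ≤ C * r ^ (-(2 + l₁) / (p - 1)) :=
  stmt_1_general n hn l₁ l₂ p q hl₂ hl hp u hupos hC2 hode hdecay
end

section
/- Let $u$ be a positive $C^2$ solution on $(0,\infty)$ of $u''+\frac{n-1}{r}u'+r^{l_1}u^p+r^{l_2}u^q=0$ with $n\ge 3$, $-2<l_2<l_1\le0$, $1<p<q$. Suppose $u(r)\le C_0 r^{-\frac{2+l_2}{q-1}}$ near $0$ and $u'<0$ near $0$. Then there exist $C>0$ and $\bar r>0$ such that $|u'(r)|\le C r^{-(\frac{2+l_2}{q-1}+1)}$ and $|u''(r)|\le C r^{-(\frac{2+l_2}{q-1}+2)}$ for all $0<r<\bar r$. -/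
/-!
Write `α = (2 + l₂)/(q - 1)`. The equation says
`(r^(n-1) u')' = -r^(n-1) (r^l₁ u^p + r^l₂ u^q) < 0`, so `r^(n-1) u'` is decreasing.
Comparing `u'(r)` with the slope of `u` on `[r, 2r]` then gives
`|u'(r)| ≤ 2^(n-1) u(r)/r ≤ C r^(-α-1)`. Solving the equation for `u''` and bounding each term
by the same scaling (`α` is exactly the exponent for which `r^l₂ u^q` scales like `r^(-α-2)`,
and the `p`-term is smaller for `r < 1`) gives `|u''(r)| ≤ C r^(-α-2)`.
-/

open Set

theorem strictAntiOn_pow_mul_deriv {u : ℝ → ℝ} {m : ℕ} (hu : ContDiffOn ℝ 2 u (Ioi 0))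
    (h : ∀ r > 0, deriv (deriv u) r + m / r * deriv u r < 0) :
    StrictAntiOn (fun r => r ^ m * deriv u r) (Ioi 0) := by
  have hu'' : ∀ r > 0, HasDerivAt (deriv u) (deriv (deriv u) r) r := fun r hr =>
    (((hu.deriv_of_isOpen isOpen_Ioi (by norm_num)).differentiableOn one_ne_zero).differentiableAt
      (Ioi_mem_nhds hr)).hasDerivAt
  have hg : ∀ r > 0, HasDerivAt (fun r => r ^ m * deriv u r)
      (r ^ m * (deriv (deriv u) r + m / r * deriv u r)) r := by
    intro r hr
    refine ((hasDerivAt_pow m r).mul (hu'' r hr)).congr_deriv ?_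
    rcases m with _ | k
    · simp
    · rw [pow_succ]; field_simp; push_cast; ring
  refine strictAntiOn_of_hasDerivWithinAt_neg (convex_Ioi 0)
    (f' := fun r => r ^ m * (deriv (deriv u) r + m / r * deriv u r))
    (fun r hr => (hg r hr).continuousAt.continuousWithinAt) (fun r hr => ?_) (fun r hr => ?_)
  · rw [interior_Ioi] at hr ⊢
    exact (hg r hr).hasDerivWithinAt
  · rw [interior_Ioi] at hr
    exact mul_neg_of_pos_of_neg (pow_pos hr m) (h r hr)

theorem neg_deriv_le_of_antitoneOn_pow_mul_deriv {u : ℝ → ℝ} {m : ℕ} {r : ℝ} (hr : 0 < r)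
    (hu : DifferentiableOn ℝ u (Icc r (2 * r)))
    (hanti : AntitoneOn (fun s => s ^ m * deriv u s) (Icc r (2 * r)))
    (hneg : ∀ s ∈ Ioo r (2 * r), deriv u s ≤ 0) (h2r : 0 ≤ u (2 * r)) :
    -deriv u r ≤ 2 ^ m * u r / r := by
  obtain ⟨c, hc, hslope⟩ := exists_deriv_eq_slope u (by linarith) hu.continuousOn
    (hu.mono Ioo_subset_Icc_self)
  have hslope : r * deriv u c = u (2 * r) - u r := by
    rw [hslope]; field_simp; ring
  have hweighted : (2 * r) ^ m * deriv u c ≤ r ^ m * deriv u r :=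
    calc (2 * r) ^ m * deriv u c
        ≤ c ^ m * deriv u c :=
          mul_le_mul_of_nonpos_right (pow_le_pow_left₀ (by linarith [hc.1]) hc.2.le m)
            (hneg c hc)
      _ ≤ r ^ m * deriv u r :=
          hanti ⟨le_rfl, by linarith⟩ (Ioo_subset_Icc_self hc) hc.1.le
  have hcomp : 2 ^ m * deriv u c ≤ deriv u r := by
    rw [mul_pow, mul_comm (2 ^ m), mul_assoc] at hweighted
    exact le_of_mul_le_mul_left hweighted (pow_pos hr m)
  rw [le_div_iff₀ hr]
  nlinarith [pow_pos (two_pos : (0 : ℝ) < 2) m]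

theorem rpow_mul_rpow_le_of_le_mul_rpow {r x C a l s : ℝ} (hr : 0 < r) (hr1 : r ≤ 1)
    (hx : 0 ≤ x) (hxC : x ≤ C * r ^ (-a)) (hs : 0 ≤ s) (hexp : -(a + 2) ≤ l - a * s) :
    r ^ l * x ^ s ≤ C ^ s * r ^ (-(a + 2)) := by
  have hC : 0 ≤ C := nonneg_of_mul_nonneg_left (hx.trans hxC) (Real.rpow_pos_of_pos hr _)
  calc r ^ l * x ^ s
      ≤ r ^ l * (C * r ^ (-a)) ^ s := by gcongr
    _ = C ^ s * r ^ (l - a * s) := by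
        rw [Real.mul_rpow hC (Real.rpow_nonneg hr.le _), ← Real.rpow_mul hr.le, sub_eq_add_neg,
          Real.rpow_add hr, neg_mul]
        ring
    _ ≤ C ^ s * r ^ (-(a + 2)) := by
        gcongr ?_ * ?_
        exact Real.rpow_le_rpow_of_exponent_ge hr hr1 hexp

theorem abs_le_mul_rpow_of_radial_eq {x x' x'' k l₁ l₂ p q α C₀ C₁ r : ℝ} (hr : 0 < r)
    (hr1 : r ≤ 1) (hk : 0 ≤ k) (hp : 0 ≤ p) (hq : 0 ≤ q)
    (hpα : -(α + 2) ≤ l₁ - α * p) (hqα : -(α + 2) ≤ l₂ - α * q)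
    (hode : x'' + k / r * x' + r ^ l₁ * x ^ p + r ^ l₂ * x ^ q = 0)
    (hx : 0 ≤ x) (hxC : x ≤ C₀ * r ^ (-α)) (hx' : |x'| ≤ C₁ * r ^ (-(α + 1))) :
    |x''| ≤ (k * C₁ + C₀ ^ p + C₀ ^ q) * r ^ (-(α + 2)) := by
  have hfirst : |k / r * x'| ≤ k * C₁ * r ^ (-(α + 2)) := by
    rw [abs_mul, abs_of_nonneg (by positivity), show -(α + 2) = -(α + 1) - 1 by ring,
      Real.rpow_sub_one hr.ne']
    calc k / r * |x'| ≤ k / r * (C₁ * r ^ (-(α + 1))) := by gcongr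
      _ = k * C₁ * (r ^ (-(α + 1)) / r) := by ring
  have hterm : ∀ {l s : ℝ}, 0 ≤ s → -(α + 2) ≤ l - α * s →
      |r ^ l * x ^ s| ≤ C₀ ^ s * r ^ (-(α + 2)) := fun hs hexp => by
    rw [abs_of_nonneg (by positivity)]
    exact rpow_mul_rpow_le_of_le_mul_rpow hr hr1 hx hxC hs hexp
  rw [show x'' = -(k / r * x' + r ^ l₁ * x ^ p + r ^ l₂ * x ^ q) by linarith, abs_neg]
  calc _ ≤ _ := abs_add_three _ _ _
    _ ≤ _ := add_le_add_three hfirst (hterm hp hpα) (hterm hq hqα)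
    _ = _ := by ring

theorem stmt_2_general (n : ℕ) (hn : 3 ≤ n) (l₁ l₂ p q : ℝ)
    (hl₂ : -2 < l₂) (hl : l₂ < l₁) (hp : 1 < p) (hpq : p < q)
    (u : ℝ → ℝ) (hupos : ∀ r > 0, 0 < u r)
    (hC2 : ContDiffOn ℝ 2 u (Set.Ioi 0))
    (hode : ∀ r > 0, deriv (deriv u) r + ((n : ℝ) - 1) / r * deriv u r
      + r ^ l₁ * u r ^ p + r ^ l₂ * u r ^ q = 0)
    (C₀ r₀ : ℝ) (hC₀ : 0 < C₀) (hr₀ : 0 < r₀)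
    (hbound : ∀ r, 0 < r → r < r₀ → u r ≤ C₀ * r ^ (-(2 + l₂) / (q - 1)))
    (hdec : ∀ r, 0 < r → r < r₀ → deriv u r < 0) :
    ∃ C > 0, ∃ rb > 0, ∀ r, 0 < r → r < rb →
      |deriv u r| ≤ C * r ^ (-((2 + l₂) / (q - 1) + 1)) ∧
      |deriv (deriv u) r| ≤ C * r ^ (-((2 + l₂) / (q - 1) + 2)) := by
  set α := (2 + l₂) / (q - 1)
  have hα : 0 ≤ α := div_nonneg (by linarith) (by linarith)
  have hαq : α * q = α + (2 + l₂) := by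
    have : α * (q - 1) = 2 + l₂ := div_mul_cancel₀ _ (by linarith)
    linarith [mul_sub_one α q]
  have hn1 : (0 : ℝ) ≤ (n : ℝ) - 1 := by
    have : (3 : ℝ) ≤ n := by exact_mod_cast hn
    linarith
  have hanti : StrictAntiOn (fun r => r ^ (n - 1) * deriv u r) (Ioi 0) :=
    strictAntiOn_pow_mul_deriv hC2 fun r hr => by
      rw [Nat.cast_pred (by omega)]
      linarith [hode r hr,
        mul_pos (Real.rpow_pos_of_pos hr l₁) (Real.rpow_pos_of_pos (hupos r hr) p),
        mul_pos (Real.rpow_pos_of_pos hr l₂) (Real.rpow_pos_of_pos (hupos r hr) q)]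
  set C₁ := 2 ^ (n - 1) * C₀
  refine ⟨max C₁ (((n : ℝ) - 1) * C₁ + C₀ ^ p + C₀ ^ q),
    lt_max_of_lt_left (by positivity), min r₀ 1 / 2, by positivity, fun r hr hrb => ?_⟩
  have hr₀ : 2 * r < r₀ := by linarith [min_le_left r₀ 1]
  have hur : u r ≤ C₀ * r ^ (-α) := by simpa only [neg_div] using hbound r hr (by linarith)
  have hu' : |deriv u r| ≤ C₁ * r ^ (-(α + 1)) := by
    rw [abs_of_neg (hdec r hr (by linarith)), neg_add', Real.rpow_sub_one hr.ne']
    calc -deriv u r ≤ 2 ^ (n - 1) * u r / r :=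
          neg_deriv_le_of_antitoneOn_pow_mul_deriv hr
            ((hC2.differentiableOn (by norm_num)).mono fun s hs => hr.trans_le hs.1)
            (hanti.antitoneOn.mono fun s hs => hr.trans_le hs.1)
            (fun s hs => (hdec s (hr.trans hs.1) (hs.2.trans hr₀)).le)
            (hupos _ (by linarith)).le
      _ ≤ 2 ^ (n - 1) * (C₀ * r ^ (-α)) / r := by gcongr
      _ = C₁ * (r ^ (-α) / r) := by ring
  have hu'' := abs_le_mul_rpow_of_radial_eq hr (by linarith [min_le_right r₀ 1]) hn1
    (by linarith) (by linarith) (by nlinarith [mul_le_mul_of_nonneg_left hpq.le hα])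
    (by linarith) (hode r hr) (hupos r hr).le hur hu'
  exact ⟨hu'.trans (by gcongr; exact le_max_left _ _),
    hu''.trans (by gcongr; exact le_max_right _ _)⟩

theorem stmt_2 (n : ℕ) (hn : 3 ≤ n) (l₁ l₂ p q : ℝ)
    (hl₂ : -2 < l₂) (hl : l₂ < l₁) (hl₁ : l₁ ≤ 0) (hp : 1 < p) (hpq : p < q)
    (u : ℝ → ℝ) (hupos : ∀ r > 0, 0 < u r)
    (hC2 : ContDiffOn ℝ 2 u (Set.Ioi 0))
    (hode : ∀ r > 0, deriv (deriv u) r + ((n : ℝ) - 1) / r * deriv u r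
      + r ^ l₁ * u r ^ p + r ^ l₂ * u r ^ q = 0)
    (C₀ r₀ : ℝ) (hC₀ : 0 < C₀) (hr₀ : 0 < r₀)
    (hbound : ∀ r, 0 < r → r < r₀ → u r ≤ C₀ * r ^ (-(2 + l₂) / (q - 1)))
    (hdec : ∀ r, 0 < r → r < r₀ → deriv u r < 0) :
    ∃ C > 0, ∃ rb > 0, ∀ r, 0 < r → r < rb →
      |deriv u r| ≤ C * r ^ (-((2 + l₂) / (q - 1) + 1)) ∧
      |deriv (deriv u) r| ≤ C * r ^ (-((2 + l₂) / (q - 1) + 2)) :=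
  stmt_2_general n hn l₁ l₂ p q hl₂ hl hp hpq u hupos hC2 hode C₀ r₀ hC₀ hr₀ hbound hdec
end

section
/- Let $v:(R,\infty)\to\mathbb{R}$ be $C^1$ with $|v'(r)|\le C/r$ and $|v''(r)|\le C/r^2$ for all $r>R$ (where $C,R>0$). If $\int_R^{\infty} r\, v'(r)^2\,dr<\infty$, then $\lim_{r\to\infty} r\,v'(r)=0$. -/
/-!
Put `g r = r v'(r)`, so that `|g'| ≤ 2C/r` and `r v'(r)² = g(r)²/r`. If `|g r| ≥ ε`, the
derivative bound keeps `|g| ≥ ε/2` on `[r, (1 + δ) r]` for `δ` of order `ε / C`, so the integral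
of `g²/t` over that interval is at least the fixed amount `ε² δ / (4 (1 + δ))`. Integrability
forces these integrals to tend to `0`, so `|g r| < ε` for all large `r`.
-/

open Filter Topology Set MeasureTheory

theorem tendsto_intervalIntegral_of_integrableOn_Ioi {α E : Type*} [NormedAddCommGroup E]
    [NormedSpace ℝ E] {f : ℝ → E} {R : ℝ} (hf : IntegrableOn f (Ioi R)) {l : Filter α}
    [l.IsCountablyGenerated] {a b : α → ℝ} (ha : Tendsto a l atTop) (hb : Tendsto b l atTop) :
    Tendsto (fun x => ∫ t in a x..b x, f t) l (𝓝 0) := by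
  have hdiff := (intervalIntegral_tendsto_integral_Ioi R hf hb).sub
    (intervalIntegral_tendsto_integral_Ioi R hf ha)
  rw [sub_self] at hdiff
  refine hdiff.congr' ?_
  filter_upwards [ha.eventually_gt_atTop R, hb.eventually_gt_atTop R] with x hax hbx
  have hint : ∀ c, R < c → IntervalIntegrable f volume R c := fun c hc =>
    (intervalIntegrable_iff_integrableOn_Ioc_of_le hc.le).2 (hf.mono_set Ioc_subset_Ioi_self)
  exact intervalIntegral.integral_interval_sub_left (hint _ hbx) (hint _ hax)

section DerivBound

variable {g : ℝ → ℝ} {R K : ℝ}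

theorem abs_sub_le_of_abs_deriv_le_div (hg : ∀ t ∈ Ioi R, DifferentiableAt ℝ g t)
    (hg' : ∀ t ∈ Ioi R, |deriv g t| ≤ K / t) (hK : 0 ≤ K) {r t : ℝ} (hrR : R < r) (hr : 0 < r)
    (hrt : r ≤ t) : |g t - g r| ≤ K / r * (t - r) := by
  refine norm_image_sub_le_of_norm_deriv_le_segment'
    (fun s hs => (hg s (hrR.trans_le hs.1)).hasDerivAt.hasDerivWithinAt) (fun s hs => ?_)
    t ⟨hrt, le_rfl⟩
  calc ‖deriv g s‖ ≤ K / s := hg' s (hrR.trans_le hs.1)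
    _ ≤ K / r := div_le_div_of_nonneg_left hK hr hs.1

theorem le_intervalIntegral_sq_div_of_le_abs (hg : ∀ t ∈ Ioi R, DifferentiableAt ℝ g t)
    (hg' : ∀ t ∈ Ioi R, |deriv g t| ≤ K / t) (hK : 0 ≤ K) {ε δ r : ℝ} (hε : 0 ≤ ε) (hδ : 0 < δ)
    (hKδ : K * δ ≤ ε / 2) (hrR : R < r) (hr : 0 < r) (hgr : ε ≤ |g r|) :
    ε ^ 2 * δ / (4 * (1 + δ)) ≤ ∫ t in r..(1 + δ) * r, g t ^ 2 / t := by
  have hrr' : r ≤ (1 + δ) * r := by nlinarith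
  have hlower : ∀ t ∈ Icc r ((1 + δ) * r), (ε / 2) ^ 2 / ((1 + δ) * r) ≤ g t ^ 2 / t := by
    intro t ht
    have hgt : ε / 2 ≤ |g t| := by
      have hsub := abs_sub_le_of_abs_deriv_le_div hg hg' hK hrR hr ht.1
      have hstep : K / r * (t - r) ≤ K * δ := by
        rw [div_mul_eq_mul_div, div_le_iff₀ hr]
        rw [mul_assoc]
        exact mul_le_mul_of_nonneg_left (by linarith [ht.2]) hK
      linarith [abs_sub_abs_le_abs_sub (g r) (g t), abs_sub_comm (g r) (g t)]
    have hsq : (ε / 2) ^ 2 ≤ g t ^ 2 := by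
      rw [← sq_abs (g t)]
      exact pow_le_pow_left₀ (by positivity) hgt 2
    exact div_le_div₀ (sq_nonneg _) hsq (hr.trans_le ht.1) ht.2
  have hcont : ContinuousOn (fun t => g t ^ 2 / t) (uIcc r ((1 + δ) * r)) := by
    rw [uIcc_of_le hrr']
    refine ContinuousOn.div (fun t ht => ?_) continuousOn_id fun t ht => (hr.trans_le ht.1).ne'
    exact ((hg t (hrR.trans_le ht.1)).continuousAt.pow 2).continuousWithinAt
  calc ε ^ 2 * δ / (4 * (1 + δ))
      = ((1 + δ) * r - r) * ((ε / 2) ^ 2 / ((1 + δ) * r)) := by field_simp; ring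
    _ = ∫ _ in r..(1 + δ) * r, (ε / 2) ^ 2 / ((1 + δ) * r) := by
        rw [intervalIntegral.integral_const, smul_eq_mul]
    _ ≤ ∫ t in r..(1 + δ) * r, g t ^ 2 / t :=
        intervalIntegral.integral_mono_on hrr' intervalIntegrable_const
          hcont.intervalIntegrable hlower

theorem tendsto_zero_of_integrableOn_sq_div_of_abs_deriv_le_div
    (hg : ∀ t ∈ Ioi R, DifferentiableAt ℝ g t) (hg' : ∀ t ∈ Ioi R, |deriv g t| ≤ K / t)
    (hK : 0 ≤ K) (hint : IntegrableOn (fun t => g t ^ 2 / t) (Ioi R)) :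
    Tendsto g atTop (𝓝 0) := by
  rw [Metric.tendsto_nhds]
  intro ε hε
  set δ := ε / (2 * (K + 1))
  have hδ : 0 < δ := by positivity
  have hKδ : K * δ ≤ ε / 2 := by
    rw [mul_div_assoc', div_le_div_iff₀ (by positivity) two_pos]
    nlinarith
  have hsmall := (tendsto_intervalIntegral_of_integrableOn_Ioi hint tendsto_id
    (tendsto_id.const_mul_atTop (by positivity : 0 < 1 + δ))).eventually_lt_const
    (by positivity : (0 : ℝ) < ε ^ 2 * δ / (4 * (1 + δ)))
  filter_upwards [hsmall, eventually_gt_atTop R, eventually_gt_atTop 0] with r hr hrR hr0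
  rw [Real.dist_eq, sub_zero]
  by_contra! hgr
  exact (le_intervalIntegral_sq_div_of_le_abs hg hg' hK hε.le hδ hKδ hrR hr0 hgr).not_gt hr

end DerivBound

theorem stmt_4 (C R : ℝ) (hC : 0 < C) (hR : 0 < R) (v : ℝ → ℝ)
    (hC1 : ∀ r ∈ Set.Ioi R, DifferentiableAt ℝ v r ∧ DifferentiableAt ℝ (deriv v) r)
    (hd1 : ∀ r ∈ Set.Ioi R, |deriv v r| ≤ C / r)
    (hd2 : ∀ r ∈ Set.Ioi R, |deriv (deriv v) r| ≤ C / r ^ 2)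
    (hint : IntegrableOn (fun r => r * (deriv v r) ^ 2) (Set.Ioi R)) :
    Tendsto (fun r => r * deriv v r) atTop (𝓝 0) := by
  have hderiv : ∀ t ∈ Ioi R,
      HasDerivAt (fun r => r * deriv v r) (deriv v t + t * deriv (deriv v) t) t := fun t ht => by
    simpa using (hasDerivAt_id' t).fun_mul (hC1 t ht).2.hasDerivAt
  refine tendsto_zero_of_integrableOn_sq_div_of_abs_deriv_le_div (K := 2 * C)
    (fun t ht => (hderiv t ht).differentiableAt) (fun t ht => ?_) (by positivity)
    (hint.congr_fun (fun t ht => ?_) measurableSet_Ioi)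
  · have ht0 : 0 < t := hR.trans ht
    rw [(hderiv t ht).deriv]
    calc |deriv v t + t * deriv (deriv v) t|
        ≤ |deriv v t| + t * |deriv (deriv v) t| := by
          rw [← abs_of_pos ht0, ← abs_mul, abs_of_pos ht0]; exact abs_add_le _ _
      _ ≤ C / t + t * (C / t ^ 2) := by gcongr; exacts [hd1 t ht, hd2 t ht]
      _ = 2 * C / t := by field_simp; ring
  · have ht0 : t ≠ 0 := (hR.trans ht).ne'
    field_simp
end

section
/- Let $n\ge3$, $0<\alpha<n-2$ with $n-2-2\alpha\ne 0$, and let $v:(R,\infty)\to(0,\infty)$ be a bounded $C^2$ solution of $v''+\frac{n-1-2\alpha}{r}v'-\frac{\lambda}{r^{2}}v+\frac{v^{p}}{r^{2}}+r^{\sigma}v^{q}=0$ where $\lambda=\alpha(n-2-\alpha)$, $p,q>1$, $\sigma<-2$. Assume $|v'(r)|\le C/r$ and $|v''(r)|\le C/r^2$ on $(R,\infty)$. Then $\int_R^{\infty} r\,v'(r)^2\,dr<\infty$. -/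
/-!
Multiplying the equation by `r² v'` gives the energy identity
`E' = -(n - 2 - 2α) r v'² - r^(σ+2) vᵠ v'` for `E = r² v'²/2 - λ v²/2 + v^(p+1)/(p+1)`.
The bounds on `v` and `r v'` make `E` bounded, and since `σ + 2 < 0` the last term is
dominated by `r^(σ+1)`, which is integrable at infinity. Integrating the identity therefore
bounds `∫ r v'²` uniformly, the coefficient `n - 2 - 2α` being nonzero.
-/

open Filter Topology Set MeasureTheory

theorem integrableOn_Ioi_of_hasDerivAt_of_abs_le {f g G : ℝ → ℝ} {a c M : ℝ} (hc : c ≠ 0)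
    (hf : ∀ x ∈ Ioi a, 0 ≤ f x) (hf_loc : ∀ b, IntegrableOn f (Ioc a b))
    (hG : ∀ x ∈ Ioi a, HasDerivAt G (c * f x + g x) x) (hGM : ∀ x ∈ Ioi a, |G x| ≤ M)
    (hg : IntegrableOn g (Ioi a)) : IntegrableOn f (Ioi a) := by
  set b := a + 1
  have hab : a < b := lt_add_one a
  have hf_loc' (T : ℝ) : IntegrableOn f (Ioc b T) :=
    (hf_loc T).mono_set (Ioc_subset_Ioc_left hab.le)
  have hbound : ∀ T, b ≤ T →
      ∫ x in b..T, ‖f x‖ ≤ (2 * M + ∫ x in Ioi a, ‖g x‖) / |c| := by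
    intro T hbT
    have hsub : Icc b T ⊆ Ioi a := fun x hx => hab.trans_le hx.1
    have hIoc : Ioc b T ⊆ Ioi a := Ioc_subset_Icc_self.trans hsub
    have hf_int : IntervalIntegrable f volume b T :=
      (intervalIntegrable_iff_integrableOn_Ioc_of_le hbT).mpr (hf_loc' T)
    have hg_int : IntervalIntegrable g volume b T :=
      (intervalIntegrable_iff_integrableOn_Ioc_of_le hbT).mpr (hg.mono_set hIoc)
    have hftc : c * (∫ x in b..T, f x) + ∫ x in b..T, g x = G T - G b := by
      rw [← intervalIntegral.integral_const_mul,
        ← intervalIntegral.integral_add (hf_int.const_mul c) hg_int]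
      refine intervalIntegral.integral_eq_sub_of_hasDerivAt (fun x hx => hG x (hsub ?_))
        ((hf_int.const_mul c).add hg_int)
      rwa [uIcc_of_le hbT] at hx
    have hg_le : |∫ x in b..T, g x| ≤ ∫ x in Ioi a, ‖g x‖ := by
      rw [intervalIntegral.integral_of_le hbT]
      exact (norm_integral_le_integral_norm _).trans
        (setIntegral_mono_set hg.norm (ae_of_all _ fun _ => norm_nonneg _) hIoc.eventuallyLE)
    have hI : 0 ≤ ∫ x in b..T, f x :=
      intervalIntegral.integral_nonneg hbT fun x hx => hf x (hsub hx)
    rw [intervalIntegral.integral_congr fun x hx => Real.norm_of_nonneg (hf x (hsub (by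
      rwa [uIcc_of_le hbT] at hx))), le_div_iff₀ (abs_pos.mpr hc)]
    calc (∫ x in b..T, f x) * |c| = |G T - G b - ∫ x in b..T, g x| := by
          rw [← hftc, add_sub_cancel_right, abs_mul, abs_of_nonneg hI, mul_comm]
      _ ≤ |G T| + |G b| + |∫ x in b..T, g x| := by
          linarith [abs_sub (G T - G b) (∫ x in b..T, g x), abs_sub (G T) (G b)]
      _ ≤ 2 * M + ∫ x in Ioi a, ‖g x‖ := by
          linarith [hGM T (hsub ⟨hbT, le_rfl⟩), hGM b (hsub ⟨le_rfl, hbT⟩)]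
  have hfar : IntegrableOn f (Ioi b) :=
    integrableOn_Ioi_of_intervalIntegral_norm_bounded _ b hf_loc' tendsto_id
      ((eventually_ge_atTop b).mono hbound)
  rw [← Ioc_union_Ioi_eq_Ioi hab.le]
  exact (hf_loc b).union hfar

theorem sq_mul_le_of_abs_le_div {r d C : ℝ} (hr : 0 < r) (hd : |d| ≤ C / r) :
    (r * d) ^ 2 ≤ C ^ 2 := by
  have h : |r * d| ≤ C := by
    rw [abs_mul, abs_of_pos hr]
    rwa [le_div_iff₀' hr] at hd
  rw [← sq_abs]
  exact pow_le_pow_left₀ (abs_nonneg _) h 2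

theorem integrableOn_Ioc_mul_deriv_sq {v : ℝ → ℝ} {R C : ℝ} (hR : 0 < R)
    (hd : ∀ r ∈ Ioi R, |deriv v r| ≤ C / r) (b : ℝ) :
    IntegrableOn (fun r => r * deriv v r ^ 2) (Ioc R b) := by
  refine Measure.integrableOn_of_bounded (M := C ^ 2 / R) measure_Ioc_lt_top.ne
    (measurable_id.mul ((measurable_deriv v).pow_const 2)).aestronglyMeasurable
    ((ae_restrict_iff' measurableSet_Ioc).mpr (ae_of_all _ fun r hr => ?_))
  have hr0 : 0 < r := hR.trans hr.1
  rw [Real.norm_of_nonneg (by positivity)]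
  calc r * deriv v r ^ 2 = (r * deriv v r) ^ 2 / r := by field_simp
    _ ≤ C ^ 2 / r := div_le_div_of_nonneg_right (sq_mul_le_of_abs_le_div hr0 (hd r hr.1)) hr0.le
    _ ≤ C ^ 2 / R := by gcongr; exact hr.1.le

theorem integrableOn_Ioi_rpow_mul_rpow_mul_deriv_mul_sq {v : ℝ → ℝ} {R C M q σ : ℝ}
    (hR : 0 < R) (hq : 0 ≤ q) (hσ : σ < -2) (hv : ContinuousOn v (Ioi R))
    (hv' : ContinuousOn (deriv v) (Ioi R)) (hv0 : ∀ r ∈ Ioi R, 0 ≤ v r)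
    (hvM : ∀ r ∈ Ioi R, v r ≤ M) (hd : ∀ r ∈ Ioi R, |deriv v r| ≤ C / r) :
    IntegrableOn (fun r => r ^ σ * v r ^ q * deriv v r * r ^ 2) (Ioi R) := by
  have hcont : ContinuousOn (fun r => r ^ σ * v r ^ q * deriv v r * r ^ 2) (Ioi R) :=
    (((continuousOn_id.rpow_const fun r hr => Or.inl (hR.trans hr).ne').mul
      (hv.rpow_const fun _ _ => Or.inr hq)).mul hv').mul (continuousOn_id.pow 2)
  refine Integrable.mono'
    ((integrableOn_Ioi_rpow_of_lt (by linarith : σ + 1 < -1) hR).const_mul (C * M ^ q))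
    (hcont.aestronglyMeasurable measurableSet_Ioi)
    ((ae_restrict_iff' measurableSet_Ioi).mpr (ae_of_all _ fun r hr => ?_))
  have hr0 : 0 < r := hR.trans hr
  have hvr := hv0 r hr
  have hvMr := hvM r hr
  have hdr := hd r hr
  have hM : 0 ≤ M := hvr.trans hvMr
  rw [Real.norm_eq_abs, abs_mul, abs_mul, abs_mul, abs_of_nonneg (Real.rpow_nonneg hr0.le σ),
    abs_of_nonneg (Real.rpow_nonneg hvr q), abs_of_nonneg (by positivity : (0 : ℝ) ≤ r ^ 2)]
  calc r ^ σ * v r ^ q * |deriv v r| * r ^ 2 ≤ r ^ σ * M ^ q * (C / r) * r ^ 2 := by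
        gcongr
    _ = C * M ^ q * r ^ (σ + 1) := by rw [Real.rpow_add_one hr0.ne']; field_simp

noncomputable def radialEnergy (lam p : ℝ) (v : ℝ → ℝ) (r : ℝ) : ℝ :=
  r ^ 2 * deriv v r ^ 2 / 2 - lam * v r ^ 2 / 2 + v r ^ (p + 1) / (p + 1)

theorem hasDerivAt_radialEnergy {v : ℝ → ℝ} {k lam p q σ r : ℝ} (hr : r ≠ 0)
    (hp : 0 ≤ p) (hv : HasDerivAt v (deriv v r) r)
    (hv' : HasDerivAt (deriv v) (deriv (deriv v) r) r)
    (hode : deriv (deriv v) r + k / r * deriv v r - lam / r ^ 2 * v r + v r ^ p / r ^ 2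
      + r ^ σ * v r ^ q = 0) :
    HasDerivAt (radialEnergy lam p v)
      ((1 - k) * (r * deriv v r ^ 2) + -(r ^ σ * v r ^ q * deriv v r * r ^ 2)) r := by
  have hpow := (hv.rpow_const (p := p + 1) (Or.inr (by linarith))).div_const (p + 1)
  rw [add_sub_cancel_right] at hpow
  refine ((((hasDerivAt_pow 2 r).mul (hv'.pow 2)).div_const 2).sub
    (((hv.pow 2).const_mul lam).div_const 2) |>.add hpow).congr_deriv ?_
  have hv'' : deriv (deriv v) r = lam / r ^ 2 * v r - v r ^ p / r ^ 2 - r ^ σ * v r ^ q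
      - k / r * deriv v r := by linarith
  have hp1 : p + 1 ≠ 0 := by linarith
  simp only [Pi.pow_apply, hv'']
  field_simp
  ring

theorem abs_radialEnergy_le {v : ℝ → ℝ} {lam p C M r : ℝ} (hr : 0 < r) (hp : 0 < p + 1)
    (hv0 : 0 ≤ v r) (hvM : v r ≤ M) (hd : |deriv v r| ≤ C / r) :
    |radialEnergy lam p v r| ≤ C ^ 2 / 2 + |lam| * M ^ 2 / 2 + M ^ (p + 1) / (p + 1) := by
  have hkin : r ^ 2 * deriv v r ^ 2 ≤ C ^ 2 := by
    rw [← mul_pow]; exact sq_mul_le_of_abs_le_div hr hd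
  have hlam : |lam * v r ^ 2| ≤ |lam| * M ^ 2 := by
    rw [abs_mul, abs_of_nonneg (sq_nonneg (v r))]; gcongr
  have hpot : v r ^ (p + 1) ≤ M ^ (p + 1) := Real.rpow_le_rpow hv0 hvM hp.le
  have hpot0 : 0 ≤ v r ^ (p + 1) := Real.rpow_nonneg hv0 _
  have hkin0 : 0 ≤ r ^ 2 * deriv v r ^ 2 := by positivity
  have hpot_div := div_le_div_of_nonneg_right hpot hp.le
  have hpot_div0 := div_nonneg hpot0 hp.le
  rw [radialEnergy, abs_le]
  constructor <;> linarith [abs_le.mp hlam]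

theorem stmt_19_general (n : ℕ) (α p q σ lam R C : ℝ)
    (hα2 : (n : ℝ) - 2 - 2 * α ≠ 0)
    (hp : 1 < p) (hq : 1 < q) (hσ : σ < -2) (hR : 0 < R)
    (v : ℝ → ℝ) (hvpos : ∀ r > R, 0 < v r) (hbdd : ∃ M, ∀ r > R, v r ≤ M)
    (hC2 : ContDiffOn ℝ 2 v (Set.Ioi R))
    (hode : ∀ r > R, deriv (deriv v) r + ((n : ℝ) - 1 - 2 * α) / r * deriv v r
      - lam / r ^ 2 * v r + v r ^ p / r ^ 2 + r ^ σ * v r ^ q = 0)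
    (hd1 : ∀ r > R, |deriv v r| ≤ C / r) :
    IntegrableOn (fun r => r * (deriv v r) ^ 2) (Set.Ioi R) := by
  obtain ⟨M, hM⟩ := hbdd
  have hv1 : ContDiffOn ℝ 1 v (Ioi R) := hC2.of_le (by norm_num)
  have hv' : ContDiffOn ℝ 1 (deriv v) (Ioi R) :=
    hC2.deriv_of_isOpen isOpen_Ioi (by norm_num)
  have hasDerivAt_of {w : ℝ → ℝ} (hw : ContDiffOn ℝ 1 w (Ioi R)) (r : ℝ)
      (hr : r ∈ Ioi R) : HasDerivAt w (deriv w r) r :=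
    ((hw.differentiableOn one_ne_zero).differentiableAt (isOpen_Ioi.mem_nhds hr)).hasDerivAt
  refine integrableOn_Ioi_of_hasDerivAt_of_abs_le (G := radialEnergy lam p v)
    (c := 1 - ((n : ℝ) - 1 - 2 * α)) (by contrapose! hα2; linarith)
    (fun r hr => mul_nonneg (hR.trans hr).le (sq_nonneg _))
    (integrableOn_Ioc_mul_deriv_sq hR hd1)
    (fun r hr => hasDerivAt_radialEnergy (hR.trans hr).ne' (by linarith)
      (hasDerivAt_of hv1 r hr) (hasDerivAt_of hv' r hr) (hode r hr))
    (fun r hr => abs_radialEnergy_le (hR.trans hr) (by linarith) (hvpos r hr).le (hM r hr)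
      (hd1 r hr))
    (integrableOn_Ioi_rpow_mul_rpow_mul_deriv_mul_sq hR (by linarith) hσ hv1.continuousOn
      hv'.continuousOn (fun r hr => (hvpos r hr).le) hM hd1).neg

theorem stmt_19 (n : ℕ) (hn : 3 ≤ n) (α p q σ lam R C : ℝ)
    (hα0 : 0 < α) (hα : α < (n : ℝ) - 2) (hα2 : (n : ℝ) - 2 - 2 * α ≠ 0)
    (hlam : lam = α * ((n : ℝ) - 2 - α))
    (hp : 1 < p) (hq : 1 < q) (hσ : σ < -2) (hR : 0 < R) (hC : 0 < C)
    (v : ℝ → ℝ) (hvpos : ∀ r > R, 0 < v r) (hbdd : ∃ M, ∀ r > R, v r ≤ M)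
    (hC2 : ContDiffOn ℝ 2 v (Set.Ioi R))
    (hode : ∀ r > R, deriv (deriv v) r + ((n : ℝ) - 1 - 2 * α) / r * deriv v r
      - lam / r ^ 2 * v r + v r ^ p / r ^ 2 + r ^ σ * v r ^ q = 0)
    (hd1 : ∀ r > R, |deriv v r| ≤ C / r)
    (hd2 : ∀ r > R, |deriv (deriv v) r| ≤ C / r ^ 2) :
    IntegrableOn (fun r => r * (deriv v r) ^ 2) (Set.Ioi R) :=
  stmt_19_general n α p q σ lam R C hα2 hp hq hσ hR v hvpos hbdd hC2 hode hd1
end
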